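/- arXiv:1803.10479 — 2 statements merged into one kernel-verified Lean document; each statement's English description precedes it below -/
import Mathlib

section
/- Let b₀ > 0 and b > 0. For x ≥ 0 and t > 0, ∫_0^∞ ∫_x^∞ e^{b·t} · e^{b₀·l} · ((y+l)/√(2πt³)) · exp(-(y+l)²/(2t)) dy dl = Φ(b₀·√t - x/√t) · exp(b₀²t/2 - b₀·x + b·t), where Φ is the standard normal CDF. -/
/-!
The integrand in `y` is an exact derivative: `∫_a^∞ u e^{-u²/2t} du = t e^{-a²/2t}`, so the
inner integral equals `t e^{-(x+l)²/2t}` up to constants. Completing the square,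
`e^{b₀ l - (x+l)²/2t} = e^{b₀²t/2 - b₀x} e^{-(l + x - b₀t)²/2t}`, turns the outer integral into a
Gaussian tail, which after the substitution `u = √t v` is a value of the normal CDF.
-/

open MeasureTheory Real

/-- The standard normal cumulative distribution function. -/
noncomputable def stdNormalCDF (z : ℝ) : ℝ :=
  ∫ y in Set.Iic z, (2 * π) ^ (-(1 : ℝ) / 2) * Real.exp (-y ^ 2 / 2)

open Set Filter Topology

theorem integral_comp_add_right_Ioi {E : Type*} [NormedAddCommGroup E] [NormedSpace ℝ E]
    (f : ℝ → E) (a c : ℝ) : ∫ u in Ioi a, f (u + c) = ∫ u in Ioi (a + c), f u := by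
  rw [← (measurePreserving_add_right volume c).setIntegral_preimage_emb
    (MeasurableEquiv.addRight c).measurableEmbedding f (Ioi (a + c))]
  congr 1
  ext u
  simp

theorem integral_Ioi_exp_neg_sq_half (c : ℝ) :
    ∫ v in Ioi c, exp (-v ^ 2 / 2) = √(2 * π) * stdNormalCDF (-c) := by
  have hrpow : (2 * π) ^ (-(1 : ℝ) / 2) = (√(2 * π))⁻¹ := by
    rw [sqrt_eq_rpow, ← rpow_neg (by positivity)]
    norm_num
  rw [stdNormalCDF, ← integral_comp_neg_Ioi, integral_const_mul, hrpow]
  simp only [even_two, Even.neg_pow]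
  field_simp

section GaussianTail

variable {t : ℝ} (ht : 0 < t)
include ht

theorem integral_Ioi_mul_exp_neg_sq_div (a : ℝ) :
    ∫ u in Ioi a, u * exp (-u ^ 2 / (2 * t)) = t * exp (-a ^ 2 / (2 * t)) := by
  have hderiv : ∀ u ∈ Ici a, HasDerivAt (fun u ↦ -t * exp (-u ^ 2 / (2 * t)))
      (u * exp (-u ^ 2 / (2 * t))) u := by
    intro u _
    have h : HasDerivAt (fun u : ℝ ↦ -u ^ 2 / (2 * t)) (-u / t) u :=
      ((hasDerivAt_pow 2 u).neg.div_const (2 * t)).congr_deriv (by field_simp; ring)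
    exact (h.exp.const_mul (-t)).congr_deriv (by field_simp)
  have hint : IntegrableOn (fun u ↦ u * exp (-u ^ 2 / (2 * t))) (Ioi a) := by
    have := integrable_mul_exp_neg_mul_sq (b := 1 / (2 * t)) (by positivity)
    refine this.integrableOn.congr_fun (fun u _ ↦ ?_) measurableSet_Ioi
    ring_nf
  have hlim : Tendsto (fun u ↦ -t * exp (-u ^ 2 / (2 * t))) atTop (𝓝 0) := by
    have h : Tendsto (fun u : ℝ ↦ -u ^ 2 / (2 * t)) atTop atBot :=
      (tendsto_neg_atBot_iff.mpr (tendsto_pow_atTop two_ne_zero)).atBot_div_const (by positivity)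
    simpa using (tendsto_exp_atBot.comp h).const_mul (-t)
  rw [integral_Ioi_of_hasDerivAt_of_tendsto' hderiv hint hlim]
  ring

theorem integral_Ioi_exp_neg_sq_div (a : ℝ) :
    ∫ u in Ioi a, exp (-u ^ 2 / (2 * t)) = √(2 * π * t) * stdNormalCDF (-a / √t) := by
  have hst : 0 < √t := sqrt_pos.mpr ht
  have hscale := integral_comp_mul_left_Ioi' (fun u ↦ exp (-u ^ 2 / (2 * t))) (a / √t) hst
  have hsub : ∀ v, exp (-(√t * v) ^ 2 / (2 * t)) = exp (-v ^ 2 / 2) := fun v ↦ by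
    rw [mul_pow, sq_sqrt ht.le]
    field_simp
  simp only [hsub, smul_eq_mul, mul_div_cancel₀ _ hst.ne'] at hscale
  rw [← hscale, integral_Ioi_exp_neg_sq_half, sqrt_mul (by positivity : (0 : ℝ) ≤ 2 * π) t, neg_div]
  ring

end GaussianTail

theorem exp_mul_mul_exp_neg_sq_div (b₀ x l t : ℝ) (ht : t ≠ 0) :
    exp (b₀ * l) * exp (-(x + l) ^ 2 / (2 * t))
      = exp (b₀ ^ 2 * t / 2 - b₀ * x) * exp (-(l + (x - b₀ * t)) ^ 2 / (2 * t)) := by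
  rw [← exp_add, ← exp_add]
  congr 1
  field_simp
  ring

theorem stmt_3_general (b₀ b : ℝ) (x t : ℝ) (ht : 0 < t) :
    (∫ l in Set.Ioi (0 : ℝ), ∫ y in Set.Ioi x,
        Real.exp (b * t) * Real.exp (b₀ * l) *
          ((y + l) / Real.sqrt (2 * π * t ^ 3)) * Real.exp (-(y + l) ^ 2 / (2 * t)))
      = stdNormalCDF (b₀ * Real.sqrt t - x / Real.sqrt t) *
          Real.exp (b₀ ^ 2 * t / 2 - b₀ * x + b * t) := by
  set K := exp (b * t) * t / √(2 * π * t ^ 3) * exp (b₀ ^ 2 * t / 2 - b₀ * x)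
  have hinner : ∀ l, ∫ y in Ioi x, exp (b * t) * exp (b₀ * l) * ((y + l) / √(2 * π * t ^ 3)) *
      exp (-(y + l) ^ 2 / (2 * t)) = K * exp (-(l + (x - b₀ * t)) ^ 2 / (2 * t)) := fun l ↦ by
    have hre : ∀ y, exp (b * t) * exp (b₀ * l) * ((y + l) / √(2 * π * t ^ 3)) *
        exp (-(y + l) ^ 2 / (2 * t)) = exp (b * t) * exp (b₀ * l) / √(2 * π * t ^ 3) *
          ((y + l) * exp (-(y + l) ^ 2 / (2 * t))) := fun y ↦ by ring
    simp_rw [hre]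
    rw [integral_const_mul, integral_comp_add_right_Ioi (fun u ↦ u * exp (-u ^ 2 / (2 * t))),
      integral_Ioi_mul_exp_neg_sq_div ht]
    linear_combination (exp (b * t) * t / √(2 * π * t ^ 3)) *
      exp_mul_mul_exp_neg_sq_div b₀ x l t ht.ne'
  have hsqrt : √(2 * π * t ^ 3) = t * √(2 * π * t) := by
    rw [show 2 * π * t ^ 3 = t ^ 2 * (2 * π * t) by ring, sqrt_mul' _ (by positivity),
      sqrt_sq ht.le]
  have harg : -(x - b₀ * t) / √t = b₀ * √t - x / √t := by
    have := mul_self_sqrt ht.le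
    field_simp
    linear_combination -b₀ * this
  simp_rw [hinner]
  rw [integral_const_mul, integral_comp_add_right_Ioi (fun u ↦ exp (-u ^ 2 / (2 * t))), zero_add,
    integral_Ioi_exp_neg_sq_div ht, harg, exp_add]
  simp only [K, hsqrt]
  field_simp

theorem stmt_3 (b₀ b : ℝ) (hb₀ : 0 < b₀) (hb : 0 < b) (x t : ℝ) (hx : 0 ≤ x) (ht : 0 < t) :
    (∫ l in Set.Ioi (0 : ℝ), ∫ y in Set.Ioi x,
        Real.exp (b * t) * Real.exp (b₀ * l) *
          ((y + l) / Real.sqrt (2 * π * t ^ 3)) * Real.exp (-(y + l) ^ 2 / (2 * t)))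
      = stdNormalCDF (b₀ * Real.sqrt t - x / Real.sqrt t) *
          Real.exp (b₀ ^ 2 * t / 2 - b₀ * x + b * t) :=
  stmt_3_general b₀ b x t ht
end

section
/- Let b₀ > 0, b > 0, λ ≥ 0, and define f(t) = Φ((b₀ - λ)√t) · exp((b₀²/2 - b₀λ + b)·t), where Φ is the standard normal CDF. Then (1/t)·log f(t) → Δ_λ as t → ∞, where Δ_λ = b₀²/2 - b₀λ + b if λ ≤ b₀, and Δ_λ = -λ²/2 + b if λ ≥ b₀. -/
open MeasureTheory Real Filter

/-!
Taking logarithms, the factor `exp (a * t)` contributes exactly `a` to the rate, so everything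
reduces to the rate of `log Φ(c √t) / t`. For `c ≥ 0`, `Φ(c √t)` stays between `Φ(0)` and `1`, so
the rate is `0`. For `c < 0` the Gaussian tail bounds `φ(x + 1) ≤ Φ(-x) ≤ φ(x)` (for `x ≥ 1`) give
`log Φ(-x) / x² → -1/2`, hence the rate `-c²/2`. Both cases read `-(min c 0)² / 2`.
-/

open ProbabilityTheory Topology

local notation "φ" => gaussianPDFReal 0 1

lemma stdNormalCDF_eq_setIntegral_gaussianPDFReal (z : ℝ) :
    stdNormalCDF z = ∫ y in Set.Iic z, φ y := by
  have hC : (2 * π) ^ (-(1 : ℝ) / 2) = (√(2 * π * (1 : NNReal)))⁻¹ := by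
    rw [NNReal.coe_one, mul_one, sqrt_eq_rpow, ← rpow_neg (by positivity)]
    norm_num
  simp [stdNormalCDF, gaussianPDFReal, hC]

lemma gaussianPDFReal_zero_one_eq (x : ℝ) : φ x = φ 0 * exp (-x ^ 2 / 2) := by
  simp [gaussianPDFReal]

lemma log_gaussianPDFReal_zero_one (x : ℝ) : log (φ x) = log (φ 0) - x ^ 2 / 2 := by
  rw [gaussianPDFReal_zero_one_eq x, log_mul (gaussianPDFReal_pos 0 1 0 one_ne_zero).ne'
    (exp_pos _).ne', log_exp]
  ring

lemma gaussianPDFReal_zero_one_le {x y : ℝ} (h : x ^ 2 ≤ y ^ 2) : φ y ≤ φ x := by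
  simp only [gaussianPDFReal, sub_zero]
  gcongr

lemma stdNormalCDF_mono : Monotone stdNormalCDF := fun a b hab => by
  simp only [stdNormalCDF_eq_setIntegral_gaussianPDFReal]
  exact setIntegral_mono_set (integrable_gaussianPDFReal 0 1).integrableOn
    (.of_forall fun y => gaussianPDFReal_nonneg 0 1 y) (Set.Iic_subset_Iic.2 hab).eventuallyLE

lemma stdNormalCDF_le_one (z : ℝ) : stdNormalCDF z ≤ 1 := by
  rw [stdNormalCDF_eq_setIntegral_gaussianPDFReal,
    ← integral_gaussianPDFReal_eq_one 0 one_ne_zero]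
  exact setIntegral_le_integral (integrable_gaussianPDFReal 0 1)
    (.of_forall fun y => gaussianPDFReal_nonneg 0 1 y)

/-- The mass of `[-x - 1, -x]` already gives the lower bound. -/
lemma gaussianPDFReal_add_one_le_stdNormalCDF_neg {x : ℝ} (hx : 0 ≤ x) :
    φ (x + 1) ≤ stdNormalCDF (-x) := by
  rw [stdNormalCDF_eq_setIntegral_gaussianPDFReal]
  have hint := (integrable_gaussianPDFReal 0 1).integrableOn (s := Set.Ioc (-x - 1) (-x))
  have hpdf : ∀ y ∈ Set.Ioc (-x - 1) (-x), φ (x + 1) ≤ φ y := fun y hy =>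
    gaussianPDFReal_zero_one_le (by nlinarith [hy.1, hy.2])
  calc φ (x + 1) = ∫ _ in Set.Ioc (-x - 1) (-x), φ (x + 1) := by simp
    _ ≤ ∫ y in Set.Ioc (-x - 1) (-x), φ y :=
      setIntegral_mono_on (integrableOn_const (by simp)) hint measurableSet_Ioc hpdf
    _ ≤ ∫ y in Set.Iic (-x), φ y :=
      setIntegral_mono_set (integrable_gaussianPDFReal 0 1).integrableOn
        (.of_forall fun y => gaussianPDFReal_nonneg 0 1 y) Set.Ioc_subset_Iic_self.eventuallyLE

lemma stdNormalCDF_pos (z : ℝ) : 0 < stdNormalCDF z :=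
  calc 0 < φ (max (-z) 0 + 1) := gaussianPDFReal_pos 0 1 _ one_ne_zero
    _ ≤ stdNormalCDF (-max (-z) 0) := gaussianPDFReal_add_one_le_stdNormalCDF_neg (le_max_right _ _)
    _ ≤ stdNormalCDF z := stdNormalCDF_mono (neg_le.2 (le_max_left _ _))

/-- On `y ≤ -x ≤ -1` the Gaussian density is dominated by `φ x * exp (x + y)`, whose integral over
`Iic (-x)` is `φ x`. -/
lemma stdNormalCDF_neg_le_gaussianPDFReal {x : ℝ} (hx : 1 ≤ x) : stdNormalCDF (-x) ≤ φ x := by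
  rw [stdNormalCDF_eq_setIntegral_gaussianPDFReal]
  have hdom : ∀ y ∈ Set.Iic (-x), φ y ≤ φ x * exp x * exp y := by
    intro y hy
    have hy : y ≤ -x := hy
    rw [gaussianPDFReal_zero_one_eq y, gaussianPDFReal_zero_one_eq x, mul_assoc, mul_assoc,
      ← exp_add, ← exp_add]
    refine mul_le_mul_of_nonneg_left (exp_le_exp.2 ?_) (gaussianPDFReal_nonneg 0 1 0)
    nlinarith [mul_nonneg (by linarith : (0:ℝ) ≤ -(y + x)) (by linarith : (0:ℝ) ≤ -(y - x) / 2 - 1)]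
  calc ∫ y in Set.Iic (-x), φ y ≤ ∫ y in Set.Iic (-x), φ x * exp x * exp y :=
        setIntegral_mono_on (integrable_gaussianPDFReal 0 1).integrableOn
          ((integrableOn_exp_Iic (-x)).const_mul _) measurableSet_Iic hdom
    _ = φ x := by rw [integral_const_mul, integral_exp_Iic, mul_assoc, ← exp_add]; simp

lemma tendsto_log_stdNormalCDF_neg_div_sq :
    Tendsto (fun x => log (stdNormalCDF (-x)) / x ^ 2) atTop (𝓝 (-1 / 2)) := by
  have hconst : Tendsto (fun x : ℝ => log (φ 0) / x ^ 2) atTop (𝓝 0) :=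
    tendsto_const_nhds.div_atTop (tendsto_pow_atTop two_ne_zero)
  have hshift : Tendsto (fun x : ℝ => (1 + x⁻¹) ^ 2 / 2) atTop (𝓝 (1 / 2)) := by
    simpa using ((tendsto_inv_atTop_zero (𝕜 := ℝ)).const_add 1 |>.pow 2).div_const 2
  refine tendsto_of_tendsto_of_tendsto_of_le_of_le' (by convert hconst.sub hshift using 2; ring)
    (by convert hconst.sub_const (1 / 2) using 2; ring) ?_ ?_
  · filter_upwards [eventually_gt_atTop 0] with x hx
    have hlog := log_le_log (gaussianPDFReal_pos 0 1 _ one_ne_zero)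
      (gaussianPDFReal_add_one_le_stdNormalCDF_neg hx.le)
    rw [log_gaussianPDFReal_zero_one] at hlog
    calc log (φ 0) / x ^ 2 - (1 + x⁻¹) ^ 2 / 2 = (log (φ 0) - (x + 1) ^ 2 / 2) / x ^ 2 := by
          field_simp
      _ ≤ log (stdNormalCDF (-x)) / x ^ 2 := by gcongr
  · filter_upwards [eventually_ge_atTop 1] with x hx
    have hlog := log_le_log (stdNormalCDF_pos _) (stdNormalCDF_neg_le_gaussianPDFReal hx)
    rw [log_gaussianPDFReal_zero_one] at hlog
    calc log (stdNormalCDF (-x)) / x ^ 2 ≤ (log (φ 0) - x ^ 2 / 2) / x ^ 2 := by gcongr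
      _ = log (φ 0) / x ^ 2 - 1 / 2 := by field_simp

lemma tendsto_inv_mul_log_stdNormalCDF_mul_sqrt (c : ℝ) :
    Tendsto (fun t => (1 / t) * log (stdNormalCDF (c * √t))) atTop (𝓝 (-(min c 0) ^ 2 / 2)) := by
  rcases le_or_gt 0 c with hc | hc
  · rw [min_eq_right hc, zero_pow two_ne_zero, neg_zero, zero_div]
    have hlower : Tendsto (fun t : ℝ => (1 / t) * log (stdNormalCDF 0)) atTop (𝓝 0) := by
      simpa using tendsto_inv_atTop_zero.mul_const (log (stdNormalCDF 0))
    refine tendsto_of_tendsto_of_tendsto_of_le_of_le' hlower tendsto_const_nhds ?_ ?_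
    all_goals filter_upwards [eventually_gt_atTop 0] with t ht
    · gcongr
      exacts [stdNormalCDF_pos 0, stdNormalCDF_mono (by positivity)]
    · exact mul_nonpos_of_nonneg_of_nonpos (by positivity)
        (log_nonpos (stdNormalCDF_pos _).le (stdNormalCDF_le_one _))
  · rw [min_eq_left hc.le]
    have hscale : Tendsto (fun t => -c * √t) atTop atTop :=
      tendsto_sqrt_atTop.const_mul_atTop (neg_pos.2 hc)
    have h := (tendsto_log_stdNormalCDF_neg_div_sq.comp hscale).const_mul (c ^ 2)
    rw [show c ^ 2 * (-1 / 2) = -c ^ 2 / 2 by ring] at h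
    refine h.congr' ?_
    filter_upwards [eventually_gt_atTop 0] with t ht
    simp only [Function.comp_apply, neg_mul, neg_neg, neg_pow_two, mul_pow, sq_sqrt ht.le]
    field_simp [hc.ne]

theorem stmt_5_general (b₀ b lam : ℝ) :
    Tendsto
      (fun t : ℝ => (1 / t) *
        Real.log (stdNormalCDF ((b₀ - lam) * Real.sqrt t) *
          Real.exp ((b₀ ^ 2 / 2 - b₀ * lam + b) * t)))
      atTop
      (nhds (if lam ≤ b₀ then b₀ ^ 2 / 2 - b₀ * lam + b else -lam ^ 2 / 2 + b)) := by
  have hlimit : (if lam ≤ b₀ then b₀ ^ 2 / 2 - b₀ * lam + b else -lam ^ 2 / 2 + b) =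
      -(min (b₀ - lam) 0) ^ 2 / 2 + (b₀ ^ 2 / 2 - b₀ * lam + b) := by
    split_ifs with h
    · simp [min_eq_right (sub_nonneg.2 h)]
    · rw [min_eq_left (by linarith)]
      ring
  rw [hlimit]
  refine ((tendsto_inv_mul_log_stdNormalCDF_mul_sqrt _).add_const _).congr' ?_
  filter_upwards [eventually_gt_atTop 0] with t ht
  rw [log_mul (stdNormalCDF_pos _).ne' (exp_pos _).ne', log_exp]
  field_simp

theorem stmt_5 (b₀ b lam : ℝ) (hb₀ : 0 < b₀) (hb : 0 < b) (hlam : 0 ≤ lam) :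
    Tendsto
      (fun t : ℝ => (1 / t) *
        Real.log (stdNormalCDF ((b₀ - lam) * Real.sqrt t) *
          Real.exp ((b₀ ^ 2 / 2 - b₀ * lam + b) * t)))
      atTop
      (nhds (if lam ≤ b₀ then b₀ ^ 2 / 2 - b₀ * lam + b else -lam ^ 2 / 2 + b)) :=
  stmt_5_general b₀ b lam
end
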